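/- arXiv:1112.1541 — 3 statements merged into one kernel-verified Lean document; each statement's English description precedes it below -/
import Mathlib

section
/- Suppose two pairs (f_p^{(1)}, p^{(1)}) and (f_p^{(2)}, p^{(2)}) of strictly positive densities and strictly positive assignment rules on J* = [c,∞) induce the same sample pdf on J*, and both p^{(1)} and p^{(2)} have finite positive limits as y → ∞. Then the ratio R(y) = f_p^{(2)}(y)/f_p^{(1)}(y) has a finite positive limit as y → ∞. Consequently, if R(y) tends to 0, tends to ∞, or has no limit as y → ∞, no such distinct pairs can induce the same sample pdf. -/
open MeasureTheory Filter

/-- Lemma 1(a): if two pairs of strictly positive densities and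
assignment rules on `J* = [c,∞)` induce the same sample pdf on `J*`, and both
assignment rules have finite positive limits as `y → ∞`, then the density
ratio `R(y) = fp2 y / fp1 y` converges to a finite positive limit as `y → ∞`.
(Consequently, if `R` tends to `0`, to `∞`, or has no limit, no such pairs can
induce the same sample pdf.) -/
theorem stmt_3 (c : ℝ) (fp1 fp2 p1 p2 : ℝ → ℝ)
    (hfp1_pos : ∀ y ∈ Set.Ici c, 0 < fp1 y)
    (hfp2_pos : ∀ y ∈ Set.Ici c, 0 < fp2 y)
    (hfp1_meas : Measurable fp1) (hfp2_meas : Measurable fp2)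
    (hfp1_one : (∫ y, fp1 y) = 1) (hfp2_one : (∫ y, fp2 y) = 1)
    (hp1 : ∀ y ∈ Set.Ici c, p1 y ∈ Set.Ioc (0 : ℝ) 1)
    (hp2 : ∀ y ∈ Set.Ici c, p2 y ∈ Set.Ioc (0 : ℝ) 1)
    (c1 c2 : ℝ)
    (hc1_def : c1 = ∫ y in Set.Ici c, p1 y * fp1 y) (hc1_pos : 0 < c1)
    (hc2_def : c2 = ∫ y in Set.Ici c, p2 y * fp2 y) (hc2_pos : 0 < c2)
    (L1 L2 : ℝ) (hL1 : 0 < L1) (hL2 : 0 < L2)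
    (hp1_lim : Tendsto p1 atTop (nhds L1))
    (hp2_lim : Tendsto p2 atTop (nhds L2))
    (hsame : ∀ y ∈ Set.Ici c, p1 y * fp1 y / c1 = p2 y * fp2 y / c2) :
    ∃ L : ℝ, 0 < L ∧ Tendsto (fun y => fp2 y / fp1 y) atTop (nhds L) := by
  refine ⟨c2 * L1 / (c1 * L2), by positivity, ?_⟩
  have hlim : Tendsto (fun y => c2 * p1 y / (c1 * p2 y)) atTop
      (nhds (c2 * L1 / (c1 * L2))) := by
    exact ((tendsto_const_nhds.mul hp1_lim).div (tendsto_const_nhds.mul hp2_lim)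
      (by positivity))
  refine Tendsto.congr' ?_ hlim
  filter_upwards [eventually_ge_atTop c] with y hy
  have h1 := hfp1_pos y hy
  have h2 := hfp2_pos y hy
  have hq1 := (hp1 y hy).1
  have hq2 := (hp2 y hy).1
  have := hsame y hy
  field_simp at this ⊢
  nlinarith [mul_pos hq2 h2]
end

section
/- Let Y_t = x'β_t + u_t with E[u_t | x, h] = 0 for t = 0,1, T be a {0,1}-valued random variable with E[T(u_1 − u_0) | x, h] = 0, and Y = T Y_1 + (1 − T) Y_0. Set g = g(x,h) = E[T | x, h] and z = (g x', (1−g) x')'. Then E[z (Y − x̃'θ) | x, h] = 0, where x̃ = (T x', (1−T) x')' and θ = (β_1', β_0')'. -/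
open MeasureTheory RealInnerProductSpace

/-! The residual `Y − x̃'θ` equals `u₀ + T (u₁ − u₀)`, which is conditionally centred given `(x, h)`.
Each block of the instrument `z` is `(x, h)`-measurable, so it pulls out of the conditional
expectation and leaves `z · E[u | x, h] = 0`. -/

theorem condExp_smul_eq_zero_of_condExp_eq_zero {Ω E : Type*} {m m0 : MeasurableSpace Ω}
    {μ : Measure Ω} [NormedAddCommGroup E] [NormedSpace ℝ E] [CompleteSpace E]
    {f : Ω → ℝ} {g : Ω → E} (hf : Integrable f μ) (hf_condExp : μ[f|m] =ᵐ[μ] 0)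
    (hg : AEStronglyMeasurable[m] g μ) (hfg : Integrable (f • g) μ) :
    μ[f • g|m] =ᵐ[μ] 0 := by
  filter_upwards [condExp_smul_of_aestronglyMeasurable_right hf hfg hg, hf_condExp] with ω h h0
  simp [h, h0]

theorem stmt_10_general {Ω : Type*} {m0 : MeasurableSpace Ω} (μ : Measure Ω)
    {k : ℕ}
    (m : MeasurableSpace Ω)
    (x : Ω → EuclideanSpace ℝ (Fin k)) (hx : Measurable[m] x)
    (T u0 u1 : Ω → ℝ)
    (hu0_int : Integrable u0 μ)
    (β0 β1 : EuclideanSpace ℝ (Fin k))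
    (hu0 : μ[u0|m] =ᵐ[μ] 0)
    (hTu : μ[fun ω => T ω * (u1 ω - u0 ω)|m] =ᵐ[μ] 0)
    (hTu_int : Integrable (fun ω => T ω * (u1 ω - u0 ω)) μ)
    (g : Ω → ℝ) (hg_meas : Measurable[m] g)
    (Y : Ω → ℝ)
    (hY : ∀ ω, Y ω = T ω * (⟪x ω, β1⟫ + u1 ω) + (1 - T ω) * (⟪x ω, β0⟫ + u0 ω))
    (u : Ω → ℝ)
    (hu : ∀ ω, u ω = Y ω - (T ω * ⟪x ω, β1⟫ + (1 - T ω) * ⟪x ω, β0⟫))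
    (hint1 : Integrable (fun ω => (g ω * u ω) • x ω) μ)
    (hint2 : Integrable (fun ω => ((1 - g ω) * u ω) • x ω) μ) :
    (μ[fun ω => (g ω * u ω) • x ω|m] =ᵐ[μ] 0) ∧
      (μ[fun ω => ((1 - g ω) * u ω) • x ω|m] =ᵐ[μ] 0) := by
  have hu_eq : u = (fun ω => T ω * (u1 ω - u0 ω)) + u0 := by
    funext ω
    rw [Pi.add_apply, hu, hY]
    ring
  have hu_int : Integrable u μ := hu_eq ▸ hTu_int.add hu0_int
  have hu_condExp : μ[u|m] =ᵐ[μ] 0 := by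
    rw [hu_eq]
    exact (condExp_add hTu_int hu0_int m).trans (by simpa using hTu.add hu0)
  have moment : ∀ c : Ω → ℝ, Measurable[m] c → Integrable (fun ω => (c ω * u ω) • x ω) μ →
      μ[fun ω => (c ω * u ω) • x ω|m] =ᵐ[μ] 0 := by
    intro c hc hint
    have hsplit : (fun ω => (c ω * u ω) • x ω) = u • fun ω => c ω • x ω := by
      funext ω
      rw [Pi.smul_apply', smul_smul, mul_comm]
    rw [hsplit] at hint ⊢
    exact condExp_smul_eq_zero_of_condExp_eq_zero hu_int hu_condExp
      (hc.smul hx).stronglyMeasurable.aestronglyMeasurable hint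
  exact ⟨moment g hg_meas hint1, moment (fun ω => 1 - g ω) (measurable_const.sub hg_meas) hint2⟩

/-- IV moment condition: with `Y_t = x'β_t + u_t`,
`E[u_t | x,h] = 0`, `E[T(u₁ − u₀) | x,h] = 0`, `g = E[T | x,h]` and
`z = (g x', (1−g) x')'`, the moment condition `E[z (Y − x̃'θ) | x,h] = 0`
holds, where `x̃ = (T x', (1−T) x')'` and `θ = (β₁', β₀')'`.  Here `m` is the
σ-algebra generated by `(x,h)`. -/
theorem stmt_10 {Ω : Type*} {m0 : MeasurableSpace Ω} (μ : Measure Ω)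
    [IsProbabilityMeasure μ] {k : ℕ}
    (m : MeasurableSpace Ω) (hm : m ≤ m0)
    (x : Ω → EuclideanSpace ℝ (Fin k)) (hx : Measurable[m] x)
    (T u0 u1 : Ω → ℝ) (hT01 : ∀ ω, T ω = 0 ∨ T ω = 1)
    (hu0_int : Integrable u0 μ) (hu1_int : Integrable u1 μ)
    (β0 β1 : EuclideanSpace ℝ (Fin k))
    (hu0 : μ[u0|m] =ᵐ[μ] 0) (hu1 : μ[u1|m] =ᵐ[μ] 0)
    (hTu : μ[fun ω => T ω * (u1 ω - u0 ω)|m] =ᵐ[μ] 0)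
    (hTu_int : Integrable (fun ω => T ω * (u1 ω - u0 ω)) μ)
    (g : Ω → ℝ) (hg_meas : Measurable[m] g) (hg : g =ᵐ[μ] μ[T|m])
    (Y : Ω → ℝ)
    (hY : ∀ ω, Y ω = T ω * (⟪x ω, β1⟫ + u1 ω) + (1 - T ω) * (⟪x ω, β0⟫ + u0 ω))
    (u : Ω → ℝ)
    (hu : ∀ ω, u ω = Y ω - (T ω * ⟪x ω, β1⟫ + (1 - T ω) * ⟪x ω, β0⟫))
    (hint1 : Integrable (fun ω => (g ω * u ω) • x ω) μ)
    (hint2 : Integrable (fun ω => ((1 - g ω) * u ω) • x ω) μ) :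
    (μ[fun ω => (g ω * u ω) • x ω|m] =ᵐ[μ] 0) ∧
      (μ[fun ω => ((1 - g ω) * u ω) • x ω|m] =ᵐ[μ] 0) :=
  stmt_10_general (m0 := m0) μ m x hx T u0 u1 hu0_int β0 β1 hu0 hTu hTu_int g hg_meas Y hY u hu
    hint1 hint2
end

section
/- The doubly-robust estimand is consistent under correct outcome model: if E[Y_t | x] = r_t(x) and strong ignorability holds, then for any measurable ẽ : ℝ^k → (0,1) (a possibly misspecified propensity model), E[ (TY − (T − ẽ(x)) r_1(x)) / ẽ(x) ] = E[Y_1] and E[ ((1−T)Y + (T − ẽ(x)) r_0(x)) / (1 − ẽ(x)) ] = E[Y_0]. -/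
open MeasureTheory ProbabilityTheory

private lemma aux_abs3 {a b c B : ℝ} (ha : |a| ≤ 1) (hb : |b| ≤ B) (hc : |c| ≤ 1) :
    |a * b * c| ≤ B := by
  have hab : |a| * |b| ≤ B := by nlinarith [abs_nonneg a, abs_nonneg b]
  have habn : 0 ≤ |a| * |b| := mul_nonneg (abs_nonneg a) (abs_nonneg b)
  rw [abs_mul, abs_mul]
  nlinarith [abs_nonneg c, mul_nonneg habn (sub_nonneg.2 hc)]

private lemma aux_abs2 {a b B : ℝ} (ha : |a| ≤ 1) (hb : |b| ≤ B) :
    |a * b| ≤ B := by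
  rw [abs_mul]
  nlinarith [abs_nonneg a, abs_nonneg b]

lemma aux_condexp_mul_of_condIndepFun {Ω : Type*} [mΩ : MeasurableSpace Ω]
    [StandardBorelSpace Ω] [Nonempty Ω]
    (μ : Measure Ω) [IsProbabilityMeasure μ]
    {mx : MeasurableSpace Ω} (hmx : mx ≤ mΩ)
    (S g : Ω → ℝ) (hS : Measurable[mΩ] S) (hS01 : ∀ ω, S ω = 0 ∨ S ω = 1)
    (hg : Measurable[mΩ] g) (hg_int : Integrable g μ)
    (hSI : CondIndepFun mx hmx S g μ) :
    (μ[fun ω => S ω * g ω | mx]) =ᵐ[μ] fun ω => (μ[S|mx]) ω * (μ[g|mx]) ω := by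
  letI : MeasurableSpace Ω := mΩ
  haveI : SigmaFinite (μ.trim hmx) := by infer_instance
  set p : Ω → ℝ := μ[S|mx] with hp
  set q : Ω → ℝ := μ[g|mx] with hq
  have hS_absle : ∀ ω, |S ω| ≤ 1 := by
    intro ω; rcases hS01 ω with h | h <;> simp [h]
  have hS_int : Integrable S μ := by
    refine Integrable.mono' (integrable_const 1)
      (hS.aestronglyMeasurable : AEStronglyMeasurable S μ) ?_
    exact Filter.Eventually.of_forall fun ω => by simpa using hS_absle ω
  have hSg_int : Integrable (fun ω => S ω * g ω) μ := by
    refine Integrable.mono' hg_int.abs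
      ((hS.mul hg).aestronglyMeasurable : AEStronglyMeasurable (fun ω => S ω * g ω) μ) ?_
    refine Filter.Eventually.of_forall fun ω => ?_
    rw [Real.norm_eq_abs, abs_mul]
    calc |S ω| * |g ω| ≤ 1 * |g ω| := mul_le_mul_of_nonneg_right (hS_absle ω) (abs_nonneg _)
      _ = |g ω| := one_mul _
  have hp_sm : StronglyMeasurable[mx] p := stronglyMeasurable_condExp
  have hq_sm : StronglyMeasurable[mx] q := stronglyMeasurable_condExp
  have hp_asm : AEStronglyMeasurable p μ := (hp_sm.mono hmx).aestronglyMeasurable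
  have hq_asm : AEStronglyMeasurable q μ := (hq_sm.mono hmx).aestronglyMeasurable
  -- p is a.e. bounded by 1
  have hp_le : ∀ᵐ ω ∂μ, |p ω| ≤ 1 := by
    have h0 : 0 ≤ᵐ[μ] p := condExp_nonneg (Filter.Eventually.of_forall fun ω => by
      rcases hS01 ω with h | h <;> simp [h])
    have h1 : p ≤ᵐ[μ] μ[(fun _ => (1:ℝ))|mx] :=
      condExp_mono hS_int (integrable_const 1)
        (Filter.Eventually.of_forall fun ω => by
          rcases hS01 ω with h | h <;> simp [h])
    rw [condExp_const hmx] at h1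
    filter_upwards [h0, h1] with ω h0 h1
    simp only [Pi.zero_apply] at h0
    rw [abs_le]; exact ⟨by linarith, h1⟩
  -- S as an indicator
  set A : Set Ω := S ⁻¹' {1} with hA
  have hA_meas : MeasurableSet[mΩ] A := hS (measurableSet_singleton 1)
  have hS_ind : S = A.indicator (fun _ => (1:ℝ)) := by
    funext ω
    rcases hS01 ω with h | h
    · have hω : ω ∉ A := by simp [hA, Set.mem_preimage, h]
      simp [hω, h]
    · have hω : ω ∈ A := by simp [hA, Set.mem_preimage, h]
      simp [hω, h]
  -- the conditional independence product formula on sets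
  have hCI := (condIndepFun_iff_condExp_inter_preimage_eq_mul (m' := mx) (hm' := hmx)
      (μ := μ) hS hg).mp hSI
  -- goal via set-integral characterization
  refine (ae_eq_condExp_of_forall_setIntegral_eq hmx hSg_int ?_ ?_ ?_).symm
  · intro s hs hμs
    refine (Integrable.mono' ((integrable_condExp : Integrable q μ).abs) (hp_asm.mul hq_asm) ?_).integrableOn
    filter_upwards [hp_le] with ω hω
    simp only [Pi.mul_apply, Real.norm_eq_abs, abs_mul]
    calc |p ω| * |q ω| ≤ 1 * |q ω| := mul_le_mul_of_nonneg_right hω (abs_nonneg _)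
      _ = |q ω| := one_mul _
  · intro s hs hμs
    have hpg_int : Integrable (fun ω => p ω * g ω) μ := by
      refine Integrable.mono' hg_int.abs (hp_asm.mul hg.aestronglyMeasurable) ?_
      filter_upwards [hp_le] with ω hω
      rw [Real.norm_eq_abs, abs_mul]
      calc |p ω| * |g ω| ≤ 1 * |g ω| := mul_le_mul_of_nonneg_right hω (abs_nonneg _)
        _ = |g ω| := one_mul _
    -- step (i): ∫_s p*q = ∫_s p*g
    have hstep1 : ∫ ω in s, p ω * q ω ∂μ = ∫ ω in s, p ω * g ω ∂μ := by
      have hmul : (μ[(fun ω => p ω * g ω)|mx]) =ᵐ[μ] fun ω => p ω * q ω :=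
        condExp_mul_of_stronglyMeasurable_left hp_sm hpg_int hg_int
      calc ∫ ω in s, p ω * q ω ∂μ = ∫ ω in s, (μ[(fun ω => p ω * g ω)|mx]) ω ∂μ :=
            (setIntegral_congr_ae (hmx s hs) (hmul.mono fun ω hω _ => hω)).symm
        _ = ∫ ω in s, p ω * g ω ∂μ := setIntegral_condExp hmx hpg_int hs
    -- step (ii): ∫_s p*g = ∫_s S*g
    set χs : Ω → ℝ := s.indicator (fun _ => (1:ℝ)) with hχs
    have hs' : MeasurableSet[mΩ] s := hmx s hs
    have hχs_m : Measurable[mΩ] χs := (measurable_const.indicator hs')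
    have hχs_le : ∀ ω, |χs ω| ≤ 1 := by
      intro ω; by_cases hω : ω ∈ s <;> simp [hχs, Set.indicator_apply, hω]
    have hind1 : ∀ (f : Ω → ℝ) (ω : Ω), s.indicator f ω = χs ω * f ω := by
      intro f ω; by_cases hω : ω ∈ s <;> simp [hχs, Set.indicator_apply, hω]
    -- the function h
    set h : Ω → ℝ := fun ω => χs ω * (S ω - p ω) with hh
    have hh_asm : AEStronglyMeasurable h μ :=
      (hχs_m.aestronglyMeasurable.mul (hS.aestronglyMeasurable.sub hp_asm))
    have hh_le : ∀ᵐ ω ∂μ, ‖h ω‖ ≤ 2 := by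
      filter_upwards [hp_le] with ω hω
      have h1 : |S ω - p ω| ≤ 2 := by
        have := hS_absle ω
        have := abs_sub (S ω) (p ω)
        calc |S ω - p ω| ≤ |S ω| + |p ω| := abs_sub _ _
          _ ≤ 2 := by linarith
      have : |h ω| ≤ 1 * 2 := by
        rw [hh, abs_mul]
        exact mul_le_mul (hχs_le ω) h1 (abs_nonneg _) zero_le_one
      simpa using this
    have hh_int : Integrable h μ :=
      Integrable.mono' (integrable_const 2) hh_asm hh_le
    -- for every Borel t, ∫_{g⁻¹ t} h = 0
    have hzero : ∀ t : Set ℝ, MeasurableSet t → ∫ ω, (g ⁻¹' t).indicator h ω ∂μ = 0 := by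
      intro t ht
      set χt : Ω → ℝ := (g ⁻¹' t).indicator (fun _ => (1:ℝ)) with hχt
      have hgt' : MeasurableSet[mΩ] (g ⁻¹' t) := hg ht
      have hχt_m : Measurable[mΩ] χt := measurable_const.indicator hgt'
      have hχt_le : ∀ ω, |χt ω| ≤ 1 := by
        intro ω; by_cases hω : ω ∈ g ⁻¹' t <;> simp [hχt, Set.indicator_apply, hω]
      have hχt_int : Integrable χt μ := by
        refine Integrable.mono' (integrable_const 1) hχt_m.aestronglyMeasurable ?_
        exact Filter.Eventually.of_forall fun ω => by simpa using hχt_le ω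
      -- identify (g⁻¹t).indicator h with χs * (S - p) * χt
      have hpoint : ∀ ω, (g ⁻¹' t).indicator h ω
          = χs ω * S ω * χt ω - χs ω * p ω * χt ω := by
        intro ω
        by_cases hω : ω ∈ g ⁻¹' t <;>
          simp [Set.indicator_apply, hω, hχt, hh] <;> ring
      -- integrability of the two products
      have hint_a : Integrable (fun ω => χs ω * S ω * χt ω) μ := by
        refine Integrable.mono' (integrable_const 1)
          (((hχs_m.mul hS).mul hχt_m).aestronglyMeasurable) ?_
        refine Filter.Eventually.of_forall fun ω => ?_
        simp only [Real.norm_eq_abs]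
        exact aux_abs3 (hχs_le ω) (hS_absle ω) (hχt_le ω)
      have hint_b : Integrable (fun ω => χs ω * p ω * χt ω) μ := by
        refine Integrable.mono' (integrable_const 1)
          ((hχs_m.aestronglyMeasurable.mul hp_asm).mul hχt_m.aestronglyMeasurable) ?_
        filter_upwards [hp_le] with ω hω
        simp only [Real.norm_eq_abs]
        exact aux_abs3 (hχs_le ω) hω (hχt_le ω)
      rw [integral_congr_ae (Filter.Eventually.of_forall hpoint), integral_sub hint_a hint_b]
      -- compute each term as a set integral over s
      have hSχt : ∀ ω, S ω * χt ω = (A ∩ g ⁻¹' t).indicator (fun _ => (1:ℝ)) ω := by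
        intro ω
        rcases hS01 ω with hSω | hSω
        · have hωA : ω ∉ A := by
            intro hωA
            have : S ω = 1 := hωA
            rw [hSω] at this; norm_num at this
          have : ω ∉ A ∩ g ⁻¹' t := fun hc => hωA hc.1
          rw [Set.indicator_of_notMem this, hSω, zero_mul]
        · have hωA : ω ∈ A := by
            show S ω ∈ ({1} : Set ℝ); simp [hSω]
          by_cases hωt : ω ∈ g ⁻¹' t
          · rw [Set.indicator_of_mem (Set.mem_inter hωA hωt), hSω, hχt,
              Set.indicator_of_mem hωt, one_mul]
          · have : ω ∉ A ∩ g ⁻¹' t := fun hc => hωt hc.2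
            rw [Set.indicator_of_notMem this, hχt, Set.indicator_of_notMem hωt, mul_zero]
      have hAt_int : Integrable ((A ∩ g ⁻¹' t).indicator (fun _ => (1:ℝ))) μ :=
        (integrable_const 1).indicator (hA_meas.inter hgt')
      have hterm_a : ∫ ω, χs ω * S ω * χt ω ∂μ
          = ∫ ω in s, (μ[(A ∩ g ⁻¹' t).indicator (fun _ => (1:ℝ))|mx]) ω ∂μ := by
        rw [setIntegral_condExp hmx hAt_int hs]
        rw [← integral_indicator hs']
        refine integral_congr_ae (Filter.Eventually.of_forall fun ω => ?_)
        simp only [hind1]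
        rw [← hSχt ω]; ring
      have hterm_b : ∫ ω, χs ω * p ω * χt ω ∂μ
          = ∫ ω in s, (μ[(fun ω => p ω * χt ω)|mx]) ω ∂μ := by
        have hpχt_int : Integrable (fun ω => p ω * χt ω) μ := by
          refine Integrable.mono' (integrable_const 1)
            (hp_asm.mul hχt_m.aestronglyMeasurable) ?_
          filter_upwards [hp_le] with ω hω
          simp only [Real.norm_eq_abs]
          exact aux_abs2 hω (hχt_le ω)
        rw [setIntegral_condExp hmx hpχt_int hs, ← integral_indicator hs']
        refine integral_congr_ae (Filter.Eventually.of_forall fun ω => ?_)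
        simp only [hind1]
        ring
      rw [hterm_a, hterm_b]
      have hcongr : (μ[(A ∩ g ⁻¹' t).indicator (fun _ => (1:ℝ))|mx])
          =ᵐ[μ] (μ[(fun ω => p ω * χt ω)|mx]) := by
        have h1 := hCI {1} t (measurableSet_singleton 1) ht
        have h2 : (μ[(fun ω => p ω * χt ω)|mx]) =ᵐ[μ]
            fun ω => p ω * (μ[χt|mx]) ω := by
          have hpχt_int : Integrable (fun ω => p ω * χt ω) μ := by
            refine Integrable.mono' (integrable_const 1)
              (hp_asm.mul hχt_m.aestronglyMeasurable) ?_
            filter_upwards [hp_le] with ω hω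
            simp only [Real.norm_eq_abs]
            exact aux_abs2 hω (hχt_le ω)
          exact condExp_mul_of_stronglyMeasurable_left hp_sm hpχt_int hχt_int
        refine h1.trans (Filter.EventuallyEq.trans ?_ h2.symm)
        have hSA : μ[S|mx] = μ[(S ⁻¹' {1} : Set Ω).indicator (fun _ => (1:ℝ))|mx] := by
          rw [← hA, ← hS_ind]
        rw [← hSA]
      exact sub_eq_zero.mpr (setIntegral_congr_ae hs' (hcongr.mono fun ω hω _ => hω))
    -- conditional expectation of h given σ(g) is zero
    set mg : MeasurableSpace Ω := MeasurableSpace.comap g Real.measurableSpace with hmg_def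
    letI : MeasurableSpace Ω := mΩ
    have hmg : mg ≤ mΩ := hg.comap_le
    haveI : SigmaFinite (μ.trim hmg) := by infer_instance
    have hcond : (0 : Ω → ℝ) =ᵐ[μ] μ[h|mg] := by
      refine ae_eq_condExp_of_forall_setIntegral_eq hmg hh_int
        (fun u hu _ => (integrable_zero _ _ _).integrableOn) ?_ ?_
      · rintro u ⟨t, ht, rfl⟩ _
        simp only [Pi.zero_apply, integral_zero]
        rw [← integral_indicator (hg ht)]
        exact (hzero t ht).symm
      · exact stronglyMeasurable_const.aestronglyMeasurable
    have hg_sm : StronglyMeasurable[mg] g :=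
      (measurable_iff_comap_le.mpr le_rfl).stronglyMeasurable
    have hgh_int : Integrable (fun ω => g ω * h ω) μ := by
      refine Integrable.mono' (hg_int.abs.const_mul 2)
        (hg.aestronglyMeasurable.mul hh_asm) ?_
      filter_upwards [hh_le] with ω hω
      rw [Real.norm_eq_abs, abs_mul]
      calc |g ω| * |h ω| ≤ |g ω| * 2 :=
            mul_le_mul_of_nonneg_left (by simpa using hω) (abs_nonneg _)
        _ = 2 * |g ω| := mul_comm _ _
    have hfinal : ∫ ω, g ω * h ω ∂μ = 0 := by
      have hmul2 : (μ[(fun ω => g ω * h ω)|mg]) =ᵐ[μ] fun ω => g ω * (μ[h|mg]) ω :=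
        condExp_mul_of_stronglyMeasurable_left hg_sm hgh_int hh_int
      rw [← integral_condExp hmg, integral_congr_ae hmul2]
      have : (fun ω => g ω * (μ[h|mg]) ω) =ᵐ[μ] 0 := by
        filter_upwards [hcond] with ω hω
        simp [← hω]
      rw [integral_congr_ae this]
      simp
    -- conclude step (ii) and the bullet
    have hstep2 : ∫ ω in s, p ω * g ω ∂μ = ∫ ω in s, S ω * g ω ∂μ := by
      have hd : ∫ ω in s, (S ω - p ω) * g ω ∂μ = 0 := by
        rw [← integral_indicator hs']
        rw [integral_congr_ae (Filter.Eventually.of_forall (fun ω => ?_)), hfinal]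
        show s.indicator (fun ω => (S ω - p ω) * g ω) ω = g ω * h ω
        rw [hind1, hh]; ring
      have hsub := integral_sub (hSg_int.integrableOn (s := s)) (hpg_int.integrableOn (s := s))
      have : ∫ ω in s, (S ω * g ω - p ω * g ω) ∂μ = ∫ ω in s, (S ω - p ω) * g ω ∂μ := by
        refine integral_congr_ae (Filter.Eventually.of_forall fun ω => by ring)
      rw [this, hd] at hsub
      linarith [hsub]
    exact hstep1.trans hstep2

  · exact (hp_sm.mul hq_sm).aestronglyMeasurable

lemma aux_zero_integral {Ω : Type*} [mΩ : MeasurableSpace Ω]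
    [StandardBorelSpace Ω] [Nonempty Ω]
    (μ : Measure Ω) [IsProbabilityMeasure μ]
    {mx : MeasurableSpace Ω} (hmx : mx ≤ mΩ)
    (S g R c : Ω → ℝ) (hS : Measurable[mΩ] S) (hS01 : ∀ ω, S ω = 0 ∨ S ω = 1)
    (hg : Measurable[mΩ] g) (hg_int : Integrable g μ)
    (hSI : CondIndepFun mx hmx S g μ)
    (hRm : Measurable[mx] R) (hR : R =ᵐ[μ] μ[g|mx]) (hR_int : Integrable R μ)
    (hc : Measurable[mx] c)
    (hZc_int : Integrable (fun ω => c ω * (S ω * (g ω - R ω))) μ) :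
    ∫ ω, c ω * (S ω * (g ω - R ω)) ∂μ = 0 := by
  letI : MeasurableSpace Ω := mΩ
  haveI : SigmaFinite (μ.trim hmx) := by infer_instance
  have hS_absle : ∀ ω, |S ω| ≤ 1 := by
    intro ω; rcases hS01 ω with h | h <;> simp [h]
  have hS_int : Integrable S μ := by
    refine Integrable.mono' (integrable_const 1)
      (hS.aestronglyMeasurable : AEStronglyMeasurable S μ) ?_
    exact Filter.Eventually.of_forall fun ω => by simpa using hS_absle ω
  have hR' : Measurable[mΩ] R := hRm.mono hmx le_rfl
  have hZ_int : Integrable (fun ω => S ω * (g ω - R ω)) μ := by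
    refine Integrable.mono' (hg_int.sub hR_int).abs
      ((hS.mul (hg.sub hR')).aestronglyMeasurable :
        AEStronglyMeasurable (fun ω => S ω * (g ω - R ω)) μ) ?_
    refine Filter.Eventually.of_forall fun ω => ?_
    simp only [Real.norm_eq_abs]
    exact aux_abs2 (hS_absle ω) le_rfl
  have hSg_int : Integrable (fun ω => S ω * g ω) μ := by
    refine Integrable.mono' hg_int.abs
      ((hS.mul hg).aestronglyMeasurable :
        AEStronglyMeasurable (fun ω => S ω * g ω) μ) ?_
    refine Filter.Eventually.of_forall fun ω => ?_
    simp only [Real.norm_eq_abs]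
    exact aux_abs2 (hS_absle ω) le_rfl
  have hRS_int : Integrable (fun ω => R ω * S ω) μ := by
    refine Integrable.mono' hR_int.abs
      ((hR'.mul hS).aestronglyMeasurable :
        AEStronglyMeasurable (fun ω => R ω * S ω) μ) ?_
    refine Filter.Eventually.of_forall fun ω => ?_
    simp only [Real.norm_eq_abs]
    rw [mul_comm]
    exact aux_abs2 (hS_absle ω) le_rfl
  -- conditional expectation of Z is zero
  have hZcond : (μ[(fun ω => S ω * (g ω - R ω))|mx]) =ᵐ[μ] 0 := by
    have hsplit : (fun ω => S ω * (g ω - R ω))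
        = (fun ω => S ω * g ω) - (fun ω => R ω * S ω) := by
      funext ω; simp only [Pi.sub_apply]; ring
    have h1 := condExp_sub (μ := μ) (m := mx) hSg_int hRS_int
    rw [← hsplit] at h1
    have h2 := aux_condexp_mul_of_condIndepFun μ hmx S g hS hS01 hg hg_int hSI
    have h3 : (μ[(fun ω => R ω * S ω)|mx]) =ᵐ[μ] fun ω => R ω * (μ[S|mx]) ω :=
      condExp_mul_of_stronglyMeasurable_left hRm.stronglyMeasurable hRS_int hS_int
    filter_upwards [h1, h2, h3, hR] with ω h1 h2 h3 h4
    simp only [Pi.sub_apply] at h1 ⊢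
    rw [h1, h2, h3, h4]
    simp [mul_comm]
  have hmul : (μ[(fun ω => c ω * (S ω * (g ω - R ω)))|mx]) =ᵐ[μ]
      fun ω => c ω * (μ[(fun ω => S ω * (g ω - R ω))|mx]) ω :=
    condExp_mul_of_stronglyMeasurable_left hc.stronglyMeasurable hZc_int hZ_int
  rw [← integral_condExp hmx, integral_congr_ae hmul]
  have : (fun ω => c ω * (μ[(fun ω => S ω * (g ω - R ω))|mx]) ω) =ᵐ[μ] 0 := by
    filter_upwards [hZcond] with ω hω
    simp [hω]
  rw [integral_congr_ae this]
  simp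

/-- double robustness, correct outcome model: if the outcome
regressions are correctly specified (`r_t(x) = E[Y_t|x]`) and strong
ignorability holds, then for any (possibly misspecified) measurable propensity
model `ẽ(x)` with values in `(0,1)`,
`E[(TY − (T − ẽ(x)) r₁(x))/ẽ(x)] = E[Y₁]` and
`E[((1−T)Y + (T − ẽ(x)) r₀(x))/(1 − ẽ(x))] = E[Y₀]`. -/
theorem stmt_15 {Ω : Type*} (mx : MeasurableSpace Ω) [mΩ : MeasurableSpace Ω] [StandardBorelSpace Ω]
    [Nonempty Ω] (μ : Measure Ω) [IsProbabilityMeasure μ]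
    (hmx : mx ≤ mΩ)
    (T Y0 Y1 : Ω → ℝ) (hT : Measurable T)
    (hT01 : ∀ ω, T ω = 0 ∨ T ω = 1)
    (hY0 : Measurable Y0) (hY1 : Measurable Y1)
    (hY0_int : Integrable Y0 μ) (hY1_int : Integrable Y1 μ)
    (hSI : CondIndepFun mx hmx T (fun ω => (Y0 ω, Y1 ω)) μ)
    (R0 R1 : Ω → ℝ) (hR0m : Measurable[mx] R0) (hR1m : Measurable[mx] R1)
    (hR0 : R0 =ᵐ[μ] μ[Y0|mx]) (hR1 : R1 =ᵐ[μ] μ[Y1|mx])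
    (etil : Ω → ℝ) (hetil_meas : Measurable[mx] etil)
    (hetil01 : ∀ ω, 0 < etil ω ∧ etil ω < 1)
    (Y : Ω → ℝ) (hY : ∀ ω, Y ω = T ω * Y1 ω + (1 - T ω) * Y0 ω)
    (hint1 : Integrable
      (fun ω => (T ω * Y ω - (T ω - etil ω) * R1 ω) / etil ω) μ)
    (hint1' : Integrable (fun ω => T ω * (Y1 ω - R1 ω) / etil ω) μ)
    (hint2 : Integrable
      (fun ω => ((1 - T ω) * Y ω + (T ω - etil ω) * R0 ω) / (1 - etil ω)) μ)
    (hint2' : Integrable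
      (fun ω => (1 - T ω) * (Y0 ω - R0 ω) / (1 - etil ω)) μ)
    (hR0_int : Integrable R0 μ) (hR1_int : Integrable R1 μ) :
    (∫ ω, (T ω * Y ω - (T ω - etil ω) * R1 ω) / etil ω ∂μ)
        = (∫ ω, Y1 ω ∂μ) ∧
      (∫ ω, ((1 - T ω) * Y ω + (T ω - etil ω) * R0 ω) / (1 - etil ω) ∂μ)
        = ∫ ω, Y0 ω ∂μ := by
  letI : MeasurableSpace Ω := mΩ
  haveI : SigmaFinite (μ.trim hmx) := by infer_instance
  have hT' : Measurable[mΩ] T := hT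
  have hY0' : Measurable[mΩ] Y0 := hY0
  have hY1' : Measurable[mΩ] Y1 := hY1
  -- Part 1
  have hSI1 : CondIndepFun mx hmx T Y1 μ := by
    have := hSI.comp measurable_id measurable_snd
    exact this
  have hZc1_int : Integrable
      (fun ω => (etil ω)⁻¹ * (T ω * (Y1 ω - R1 ω))) μ := by
    refine hint1'.congr (Filter.Eventually.of_forall fun ω => ?_)
    simp only [div_eq_mul_inv]; ring
  have hzero1 : ∫ ω, (etil ω)⁻¹ * (T ω * (Y1 ω - R1 ω)) ∂μ = 0 :=
    aux_zero_integral μ hmx T Y1 R1 (fun ω => (etil ω)⁻¹) hT' hT01 hY1' hY1_int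
      hSI1 hR1m hR1 hR1_int hetil_meas.inv hZc1_int
  have hid1 : ∀ ω, (T ω * Y ω - (T ω - etil ω) * R1 ω) / etil ω
      = R1 ω + (etil ω)⁻¹ * (T ω * (Y1 ω - R1 ω)) := by
    intro ω
    have he : etil ω ≠ 0 := (hetil01 ω).1.ne'
    rcases hT01 ω with h | h <;> rw [hY ω, h] <;> field_simp <;> ring
  have hpart1 : (∫ ω, (T ω * Y ω - (T ω - etil ω) * R1 ω) / etil ω ∂μ)
      = ∫ ω, Y1 ω ∂μ := by
    calc ∫ ω, (T ω * Y ω - (T ω - etil ω) * R1 ω) / etil ω ∂μ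
        = ∫ ω, (R1 ω + (etil ω)⁻¹ * (T ω * (Y1 ω - R1 ω))) ∂μ :=
          integral_congr_ae (Filter.Eventually.of_forall fun ω => hid1 ω)
      _ = (∫ ω, R1 ω ∂μ) + ∫ ω, (etil ω)⁻¹ * (T ω * (Y1 ω - R1 ω)) ∂μ :=
          integral_add hR1_int hZc1_int
      _ = ∫ ω, R1 ω ∂μ := by rw [hzero1, add_zero]
      _ = ∫ ω, (μ[Y1|mx]) ω ∂μ := integral_congr_ae hR1
      _ = ∫ ω, Y1 ω ∂μ := integral_condExp hmx
  -- Part 2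
  have hS2 : Measurable[mΩ] (fun ω => 1 - T ω) := measurable_const.sub hT'
  have hS201 : ∀ ω, (1 - T ω) = 0 ∨ (1 - T ω) = 1 := by
    intro ω; rcases hT01 ω with h | h <;> simp [h]
  have hSI2 : CondIndepFun mx hmx (fun ω => 1 - T ω) Y0 μ := by
    have := hSI.comp (measurable_const.sub measurable_id : Measurable fun x : ℝ => 1 - x)
      measurable_fst
    exact this
  have hZc2_int : Integrable
      (fun ω => (1 - etil ω)⁻¹ * ((1 - T ω) * (Y0 ω - R0 ω))) μ := by
    refine hint2'.congr (Filter.Eventually.of_forall fun ω => ?_)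
    simp only [div_eq_mul_inv]; ring
  have hzero2 : ∫ ω, (1 - etil ω)⁻¹ * ((1 - T ω) * (Y0 ω - R0 ω)) ∂μ = 0 :=
    aux_zero_integral μ hmx (fun ω => 1 - T ω) Y0 R0 (fun ω => (1 - etil ω)⁻¹)
      hS2 hS201 hY0' hY0_int hSI2 hR0m hR0 hR0_int
      (measurable_const.sub hetil_meas).inv hZc2_int
  have hid2 : ∀ ω, ((1 - T ω) * Y ω + (T ω - etil ω) * R0 ω) / (1 - etil ω)
      = R0 ω + (1 - etil ω)⁻¹ * ((1 - T ω) * (Y0 ω - R0 ω)) := by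
    intro ω
    have he : (1 : ℝ) - etil ω ≠ 0 := (sub_pos.mpr (hetil01 ω).2).ne'
    rcases hT01 ω with h | h <;> rw [hY ω, h] <;> field_simp <;> ring
  have hpart2 : (∫ ω, ((1 - T ω) * Y ω + (T ω - etil ω) * R0 ω) / (1 - etil ω) ∂μ)
      = ∫ ω, Y0 ω ∂μ := by
    calc ∫ ω, ((1 - T ω) * Y ω + (T ω - etil ω) * R0 ω) / (1 - etil ω) ∂μ
        = ∫ ω, (R0 ω + (1 - etil ω)⁻¹ * ((1 - T ω) * (Y0 ω - R0 ω))) ∂μ :=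
          integral_congr_ae (Filter.Eventually.of_forall fun ω => hid2 ω)
      _ = (∫ ω, R0 ω ∂μ) + ∫ ω, (1 - etil ω)⁻¹ * ((1 - T ω) * (Y0 ω - R0 ω)) ∂μ :=
          integral_add hR0_int hZc2_int
      _ = ∫ ω, R0 ω ∂μ := by rw [hzero2, add_zero]
      _ = ∫ ω, (μ[Y0|mx]) ω ∂μ := integral_congr_ae hR0
      _ = ∫ ω, Y0 ω ∂μ := integral_condExp hmx
  exact ⟨hpart1, hpart2⟩
end
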